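/- Let W : Fin n → Fin n → ℝ≥0 be such that for each i the i-th row sum equals the i-th column sum and is an integer. Suppose B' is the bipartite graph on parts X = {x_1,...,x_n}, Y = {y_1,...,y_n} whose edges are the pairs (x_i, y_j) with W_{ij} not an integer. If B' is acyclic (a forest), then B' has no edges, i.e., every entry of W is an integer. -/

import Mathlib

/-!
A leaf `x_i` of the forest of decimal entries has exactly one decimal entry `W i j` in its row
(for a leaf `y_j`, in its column, whose sum equals the `j`-th row sum). That entry is then an
integer row sum minus a sum of integers, hence an integer: a contradiction. So the forest has no
leaves, and a finite forest without leaves has no edges.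
-/

open scoped NNReal

def IsIntNN (x : ℝ≥0) : Prop := ∃ m : ℕ, x = (m : ℝ≥0)

/-- The bipartite graph of decimal (non-integer) entries of `W`: the left part is
`Sum.inl`-vertices (the `x_i`), the right part is `Sum.inr`-vertices (the `y_j`),
and `x_i` is adjacent to `y_j` iff `W i j` is not an integer. -/
def decimalGraph {n : ℕ} (W : Fin n → Fin n → ℝ≥0) : SimpleGraph (Fin n ⊕ Fin n) where
  Adj a b :=
    match a, b with
    | Sum.inl i, Sum.inr j => ¬ IsIntNN (W i j)
    | Sum.inr j, Sum.inl i => ¬ IsIntNN (W i j)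
    | _, _ => False
  symm := ⟨by rintro (i | i) (j | j) h <;> simp_all⟩
  loopless := ⟨by rintro (i | i) h <;> simp_all⟩

namespace SimpleGraph.IsAcyclic

variable {V : Type*} {G : SimpleGraph V}

theorem exists_existsUnique_adj [Finite G.edgeSet] (hG : G.IsAcyclic) {a b : V}
    (hab : G.Adj a b) : ∃ u, ∃! v, G.Adj u v := by
  have : Nonempty V := ⟨a⟩
  -- an end of a longest path is a leaf
  obtain ⟨u, v, p, hp, hmax⟩ := Walk.exists_isPath_forall_isPath_length_le_length G
  have hnil : ¬p.Nil := fun h ↦ by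
    simpa [Walk.length_eq_zero_iff.mpr h] using hmax _ _ _ (Path.singleton hab).isPath
  refine ⟨u, p.snd, p.adj_snd hnil, fun w hw ↦ hG.eq_snd_of_adj_start hp hw ?_⟩
  by_contra hw'
  simpa using hmax _ _ _ (hp.cons hw' (h := hw.symm))

end SimpleGraph.IsAcyclic

namespace IsIntNN

theorem sum {ι : Type*} {s : Finset ι} {f : ι → ℝ≥0} (h : ∀ i ∈ s, IsIntNN (f i)) :
    IsIntNN (∑ i ∈ s, f i) :=
  Finset.sum_induction f IsIntNN (fun _ _ ⟨m, hm⟩ ⟨k, hk⟩ ↦ ⟨m + k, by rw [hm, hk, Nat.cast_add]⟩)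
    ⟨0, by simp⟩ h

theorem of_add_right {x y : ℝ≥0} (hxy : IsIntNN (x + y)) (hy : IsIntNN y) : IsIntNN x := by
  obtain ⟨m, hm⟩ := hxy
  obtain ⟨k, rfl⟩ := hy
  have hkm : k ≤ m := by exact_mod_cast le_add_self.trans hm.le
  refine ⟨m - k, add_right_cancel (b := (k : ℝ≥0)) ?_⟩
  rw [hm, ← Nat.cast_add, Nat.sub_add_cancel hkm]

theorem of_sum_of_forall_ne {ι : Type*} [Fintype ι] [DecidableEq ι] {f : ι → ℝ≥0}
    (hsum : IsIntNN (∑ i, f i)) (j : ι) (h : ∀ i ≠ j, IsIntNN (f i)) : IsIntNN (f j) := by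
  rw [← Finset.add_sum_erase _ _ (Finset.mem_univ j)] at hsum
  exact hsum.of_add_right (sum fun i hi ↦ h i (Finset.ne_of_mem_erase hi))

end IsIntNN

theorem decimalGraph_not_existsUnique_adj {n : ℕ} {W : Fin n → Fin n → ℝ≥0}
    (hrow : ∀ i, IsIntNN (∑ j, W i j)) (hcol : ∀ j, IsIntNN (∑ i, W i j))
    (u : Fin n ⊕ Fin n) : ¬ ∃! v, (decimalGraph W).Adj u v := by
  rintro ⟨v, huv, huniq⟩
  rcases u with i | j <;> rcases v with i' | j'
  · exact huv
  · refine huv ((hrow i).of_sum_of_forall_ne j' fun j hj ↦ by_contra fun hdec ↦ hj ?_)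
    exact Sum.inr_injective (huniq (Sum.inr j) hdec)
  · refine huv ((hcol j).of_sum_of_forall_ne i' fun i hi ↦ by_contra fun hdec ↦ hi ?_)
    exact Sum.inl_injective (huniq (Sum.inl i) hdec)
  · exact huv

theorem acyclic_decimal_subgraph_is_empty {n : ℕ} (W : Fin n → Fin n → ℝ≥0)
    (hbal : ∀ i, ∑ j, W i j = ∑ k, W k i)
    (hint : ∀ i, ∃ m : ℕ, ∑ j, W i j = (m : ℝ≥0))
    (hforest : (decimalGraph W).IsAcyclic) :
    ∀ i j, IsIntNN (W i j) := by
  intro i j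
  by_contra hij
  obtain ⟨u, hu⟩ := hforest.exists_existsUnique_adj (a := Sum.inl i) (b := Sum.inr j) hij
  have hcol : ∀ j, IsIntNN (∑ i, W i j) := fun j ↦ hbal j ▸ hint j
  exact decimalGraph_not_existsUnique_adj hint hcol u hu
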